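/- For every integer t ≥ 2, let F_t be the graph obtained from the 4t-cycle with vertices v₁, v₂, …, v_{4t} (consecutive vertices adjacent, indices mod 4t) by adding the two edges {v₁, v₃} and {v_{2t+1}, v_{2t+3}}. Then: (a) F_t is (4t−2)-chordal and has an induced cycle of length 4t−2, so the chordality of F_t equals 4t−2; and (b) the hyperbolicity of F_t equals t − 1/2, i.e., every quadruple of vertices x, y, u, v satisfies d(x,y) + d(u,v) ≤ max(d(x,u) + d(y,v), d(x,v) + d(y,u)) + (2t − 1), and the quadruple (x,y,u,v) = (v₂, v_{2t+2}, v_{t+2}, v_{3t+2}) satisfies d(x,y) + d(u,v) = max(d(x,u) + d(y,v), d(x,v) + d(y,u)) + (2t − 1). -/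

import Mathlib

/-- A graph is `k`-chordal if it has no induced cycle of length greater than `k`. -/
def IsKChordal {V : Type*} (G : SimpleGraph V) (k : ℕ) : Prop :=
  ∀ n : ℕ, 3 ≤ n → k < n → IsEmpty (SimpleGraph.cycleGraph n ↪g G)

/-- The graph `F_t`: the `4t`-cycle on vertices `v₁, …, v_{4t}` (vertex `vᵢ` is
represented by `i - 1 : ZMod (4t)`, consecutive vertices adjacent) together with
the two extra edges `{v₁, v₃} = {0, 2}` and `{v_{2t+1}, v_{2t+3}} = {2t, 2t+2}`. -/
def graphF (t : ℕ) : SimpleGraph (ZMod (4 * t)) :=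
  SimpleGraph.fromRel (fun a b =>
    b = a + 1 ∨ (a = 0 ∧ b = 2) ∨ (a = (2 * t : ℕ) ∧ b = ((2 * t + 2 : ℕ) : ZMod (4 * t))))


/-!
The chords `{0, 2}` and `{2t, 2t + 2}` give `0` and `2t` three neighbours each, so an induced
cycle must omit a vertex from each of their disjoint closed neighbourhoods and has length at most
`4t - 2`; omitting `1` and `2t + 1` leaves an induced cycle of exactly that length.

Every pair of vertices is at distance at most `2t - 1` except the antipodal pair `{1, 2t + 1}`,
which no chord shortens. By the triangle inequality each of `d(x, y)`, `d(u, v)` is at most the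
larger of the two other pair sums, and the smaller of them is at most `2t - 1` unless both pairs
are `{1, 2t + 1}`; this gives the four-point condition with `2δ = 2t - 1`. The matching lower
bounds on distances come from explicit 1-Lipschitz functions.
-/

open SimpleGraph

namespace SimpleGraph

variable {V : Type*} {G : SimpleGraph V}

theorem Walk.abs_sub_le_length (f : V → ℤ) (hf : ∀ ⦃x y⦄, G.Adj x y → |f x - f y| ≤ 1)
    {x y : V} (p : G.Walk x y) : |f x - f y| ≤ p.length := by
  induction p with
  | nil => simp
  | @cons x y z hxy p ih =>
    calc |f x - f z| ≤ |f x - f y| + |f y - f z| := abs_sub_le _ _ _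
      _ ≤ 1 + p.length := add_le_add (hf hxy) ih
      _ = (cons hxy p).length := by push_cast [Walk.length_cons]; ring

theorem Reachable.abs_sub_le_dist (f : V → ℤ) (hf : ∀ ⦃x y⦄, G.Adj x y → |f x - f y| ≤ 1)
    {x y : V} (hxy : G.Reachable x y) : |f x - f y| ≤ G.dist x y := by
  obtain ⟨p, hp⟩ := hxy.exists_walk_length_eq_dist
  exact hp ▸ p.abs_sub_le_length f hf

theorem exists_walk_add_natCast_length_eq [AddMonoidWithOne V] (hG : ∀ x, G.Adj x (x + 1))
    (x : V) (k : ℕ) : ∃ p : G.Walk x (x + k), p.length = k := by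
  induction k with
  | zero => exact ⟨Walk.nil.copy rfl (by simp), by simp⟩
  | succ k ih =>
    obtain ⟨p, hp⟩ := ih
    exact ⟨(p.concat (hG _)).copy rfl (by push_cast; rw [add_assoc]), by simp [hp]⟩

theorem dist_add_natCast_le [AddMonoidWithOne V] (hG : ∀ x, G.Adj x (x + 1)) (x : V) (k : ℕ) :
    G.dist x (x + k) ≤ k :=
  let ⟨p, hp⟩ := exists_walk_add_natCast_length_eq hG x k
  (dist_le p).trans_eq hp

theorem Connected.dist_add_dist_le_max_add {a b : V} {D : ℕ} (hG : G.Connected)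
    (hD : ∀ x y, s(x, y) ≠ s(a, b) → G.dist x y ≤ D) (x y u v : V) :
    G.dist x y + G.dist u v ≤
      max (G.dist x u + G.dist y v) (G.dist x v + G.dist y u) + D := by
  have hxy := hG.dist_triangle (u := x) (v := u) (w := y)
  have hxy' := hG.dist_triangle (u := x) (v := v) (w := y)
  have huv := hG.dist_triangle (u := u) (v := x) (w := v)
  have huv' := hG.dist_triangle (u := u) (v := y) (w := v)
  rw [dist_comm (u := u) (v := y)] at hxy
  rw [dist_comm (u := v) (v := y)] at hxy'
  rw [dist_comm (u := u) (v := x)] at huv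
  rw [dist_comm (u := u) (v := y)] at huv'
  by_cases h₁ : s(x, y) = s(a, b)
  · by_cases h₂ : s(u, v) = s(a, b)
    · rcases Sym2.eq_iff.mp (h₁.trans h₂.symm) with ⟨rfl, rfl⟩ | ⟨rfl, rfl⟩
      · rw [dist_comm (u := y) (v := x)]; exact le_add_right (le_max_right _ _)
      · exact le_add_right (le_max_left _ _)
    · have := hD u v h₂; omega
  · have := hD x y h₁; omega

theorem Embedding.not_subset_range_of_three_neighbors {n : ℕ} (e : cycleGraph (n + 2) ↪g G)
    {z a b c : V} (ha : G.Adj z a) (hb : G.Adj z b) (hc : G.Adj z c)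
    (hab : a ≠ b) (hac : a ≠ c) (hbc : b ≠ c) : ¬ {z, a, b, c} ⊆ Set.range e := by
  intro h
  simp only [Set.insert_subset_iff, Set.singleton_subset_iff, Set.mem_range] at h
  obtain ⟨⟨i, rfl⟩, ⟨j, rfl⟩, ⟨k, rfl⟩, ⟨l, rfl⟩⟩ := h
  have hj : j ∈ (cycleGraph (n + 2)).neighborSet i := e.map_adj_iff.mp ha
  have hk : k ∈ (cycleGraph (n + 2)).neighborSet i := e.map_adj_iff.mp hb
  have hl : l ∈ (cycleGraph (n + 2)).neighborSet i := e.map_adj_iff.mp hc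
  simp only [cycleGraph_neighborSet, Set.mem_insert_iff, Set.mem_singleton_iff] at hj hk hl
  rcases hj with rfl | rfl <;> rcases hk with rfl | rfl <;> rcases hl with rfl | rfl <;>
    simp_all

end SimpleGraph

theorem Fintype.card_add_two_le_of_injective {α β : Type*} [Fintype α] [Fintype β] {f : α → β}
    (hf : Function.Injective f) {w₁ w₂ : β} (hne : w₁ ≠ w₂) (h₁ : w₁ ∉ Set.range f)
    (h₂ : w₂ ∉ Set.range f) : Fintype.card α + 2 ≤ Fintype.card β := by
  classical
  have := Finset.card_le_univ (insert w₁ (insert w₂ (Finset.univ.map ⟨f, hf⟩)))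
  rwa [Finset.card_insert_of_notMem (by simpa [hne] using h₁),
    Finset.card_insert_of_notMem (by simpa using h₂), Finset.card_map, Finset.card_univ] at this

theorem ZMod.natCast_eq_natCast_iff_of_lt {n a b : ℕ} (ha : a < n) (hb : b < n) :
    (a : ZMod n) = b ↔ a = b :=
  ⟨fun h => ((ZMod.natCast_eq_natCast_iff a b n).mp h).eq_of_lt_of_lt ha hb,
    congrArg Nat.cast⟩

theorem ZMod.natCast_eq_natCast_add_one_iff {n a b : ℕ} (ha : a < n) (hb : b < n) :
    (b : ZMod n) = a + 1 ↔ b = a + 1 ∨ (a + 1 = n ∧ b = 0) := by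
  rw [← Nat.cast_succ]
  rcases (Nat.succ_le_of_lt ha).lt_or_eq with h | h
  · rw [ZMod.natCast_eq_natCast_iff_of_lt hb h]; omega
  · rw [h, ZMod.natCast_self, ← Nat.cast_zero, ZMod.natCast_eq_natCast_iff_of_lt hb (by omega)]
    omega

variable {t : ℕ}

theorem graphF_adj_add_one (ht : 0 < t) (x : ZMod (4 * t)) : (graphF t).Adj x (x + 1) := by
  have : Fact (1 < 4 * t) := ⟨by omega⟩
  exact ⟨by simp, Or.inl (Or.inl rfl)⟩

theorem graphF_connected (ht : 0 < t) : (graphF t).Connected := by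
  have : NeZero (4 * t) := ⟨by omega⟩
  refine ⟨fun x y => ?_⟩
  have hy : y = x + (y - x).val := by rw [ZMod.natCast_zmod_val, add_sub_cancel]
  obtain ⟨p, -⟩ := exists_walk_add_natCast_length_eq (graphF_adj_add_one ht) x (y - x).val
  exact hy ▸ p.reachable

theorem graphF_dist_natCast_le_sub (ht : 0 < t) {a b : ℕ} (hab : a ≤ b) :
    (graphF t).dist (a : ZMod (4 * t)) b ≤ b - a := by
  have := dist_add_natCast_le (graphF_adj_add_one ht) (a : ZMod (4 * t)) (b - a)
  rwa [← Nat.cast_add, Nat.add_sub_cancel' hab] at this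

theorem graphF_dist_natCast_le_add_sub (ht : 0 < t) {a b : ℕ} (hb : b ≤ 4 * t) :
    (graphF t).dist (a : ZMod (4 * t)) b ≤ a + 4 * t - b := by
  have := dist_add_natCast_le (graphF_adj_add_one ht) (b : ZMod (4 * t)) (a + 4 * t - b)
  rwa [← Nat.cast_add, Nat.add_sub_cancel' (by omega), Nat.cast_add, ZMod.natCast_self,
    add_zero, dist_comm] at this

theorem graphF_adj_natCast_iff (ht : 2 ≤ t) {a b : ℕ} (ha : a < 4 * t) (hb : b < 4 * t) :
    (graphF t).Adj a b ↔
      b = a + 1 ∨ a = b + 1 ∨ (a = 0 ∧ b = 4 * t - 1) ∨ (b = 0 ∧ a = 4 * t - 1) ∨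
      (a = 0 ∧ b = 2) ∨ (b = 0 ∧ a = 2) ∨
      (a = 2 * t ∧ b = 2 * t + 2) ∨ (b = 2 * t ∧ a = 2 * t + 2) := by
  have hcast : ∀ {c d : ℕ}, c < 4 * t → d < 4 * t → ((c : ZMod (4 * t)) = d ↔ c = d) :=
    ZMod.natCast_eq_natCast_iff_of_lt
  have h2 : (2 : ZMod (4 * t)) = ((2 : ℕ) : ZMod (4 * t)) := by norm_cast
  rw [graphF, fromRel_adj, ← Nat.cast_zero, h2, ne_eq, hcast ha hb,
    ZMod.natCast_eq_natCast_add_one_iff ha hb, ZMod.natCast_eq_natCast_add_one_iff hb ha,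
    hcast ha (by omega), hcast hb (by omega), hcast ha (by omega), hcast hb (by omega),
    hcast ha (by omega), hcast hb (by omega), hcast ha (by omega), hcast hb (by omega)]
  omega

theorem graphF_abs_sub_le_dist (ht : 0 < t) (f : ℕ → ℤ)
    (hf : ∀ a b, a < 4 * t → b < 4 * t → (graphF t).Adj a b → |f a - f b| ≤ 1)
    {a b : ℕ} (ha : a < 4 * t) (hb : b < 4 * t) :
    |f a - f b| ≤ (graphF t).dist (a : ZMod (4 * t)) b := by
  have : NeZero (4 * t) := ⟨by omega⟩
  have hf' : ∀ ⦃x y : ZMod (4 * t)⦄, (graphF t).Adj x y → |f x.val - f y.val| ≤ 1 :=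
    fun x y h => hf _ _ x.val_lt y.val_lt (by rwa [ZMod.natCast_zmod_val, ZMod.natCast_zmod_val])
  have := ((graphF_connected ht) (a : ZMod (4 * t)) b).abs_sub_le_dist _ hf'
  rwa [ZMod.val_cast_of_lt ha, ZMod.val_cast_of_lt hb] at this

/-- The graph distance from `1` to the vertex with residue `v`. -/
def distFromOne (t v : ℕ) : ℤ :=
  if v = 0 then 1 else if v ≤ 2 * t + 1 then v - 1 else 4 * t + 1 - v

/-- The graph distance from `t + 1` to the vertex with residue `v`. -/
def distFromMid (t v : ℕ) : ℤ :=
  if v = 0 then t else if v ≤ t + 1 then t + 1 - v else if v ≤ 2 * t + 1 then v - t - 1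
  else if v ≤ 3 * t + 1 then v - t - 2 else 5 * t - v

theorem abs_distFromOne_sub_le_one (ht : 2 ≤ t) (a b : ℕ) (ha : a < 4 * t) (hb : b < 4 * t)
    (h : (graphF t).Adj a b) : |distFromOne t a - distFromOne t b| ≤ 1 := by
  rw [graphF_adj_natCast_iff ht ha hb] at h
  unfold distFromOne
  split_ifs <;> rw [abs_le] <;> omega

theorem graphF_two_mul_le_dist_one (ht : 2 ≤ t) :
    2 * t ≤ (graphF t).dist ((1 : ℕ) : ZMod (4 * t)) ((2 * t + 1 : ℕ) : ZMod (4 * t)) := by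
  have := graphF_abs_sub_le_dist (t := t) (by omega) (distFromOne t)
    (abs_distFromOne_sub_le_one ht) (a := 1) (b := 2 * t + 1) (by omega) (by omega)
  have e₁ : distFromOne t 1 = 0 := by simp [distFromOne]
  have e₂ : distFromOne t (2 * t + 1) = 2 * t := by simp [distFromOne]
  rw [e₁, e₂, abs_le] at this
  omega

theorem abs_distFromMid_sub_le_one (ht : 2 ≤ t) (a b : ℕ) (ha : a < 4 * t) (hb : b < 4 * t)
    (h : (graphF t).Adj a b) : |distFromMid t a - distFromMid t b| ≤ 1 := by
  rw [graphF_adj_natCast_iff ht ha hb] at h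
  unfold distFromMid
  split_ifs <;> rw [abs_le] <;> omega

theorem graphF_two_mul_sub_one_le_dist_mid (ht : 2 ≤ t) :
    2 * t - 1 ≤ (graphF t).dist ((t + 1 : ℕ) : ZMod (4 * t)) ((3 * t + 1 : ℕ) : ZMod (4 * t)) := by
  have := graphF_abs_sub_le_dist (t := t) (by omega) (distFromMid t)
    (abs_distFromMid_sub_le_one ht) (a := t + 1) (b := 3 * t + 1) (by omega) (by omega)
  have e₁ : distFromMid t (t + 1) = 0 := by simp [distFromMid]
  have e₂ : distFromMid t (3 * t + 1) = 2 * t - 1 := by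
    rw [distFromMid, if_neg (by omega), if_neg (by omega), if_neg (by omega), if_pos (by omega)]
    push_cast; ring
  rw [e₁, e₂, abs_le] at this
  omega

theorem graphF_dist_natCast_le (ht : 2 ≤ t) {a b : ℕ} (ha : a < 4 * t) (hb : b < 4 * t)
    (h₁ : ¬(a = 1 ∧ b = 2 * t + 1)) (h₂ : ¬(a = 2 * t + 1 ∧ b = 1)) :
    (graphF t).dist (a : ZMod (4 * t)) b ≤ 2 * t - 1 := by
  wlog hab : a ≤ b generalizing a b
  · rw [dist_comm]; exact this hb ha (fun h => h₂ h.symm) (fun h => h₁ h.symm) (by omega)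
  have ht₀ : 0 < t := by omega
  have hconn := graphF_connected ht₀
  have hchord : (graphF t).Adj ((0 : ℕ) : ZMod (4 * t)) (2 : ℕ) :=
    (graphF_adj_natCast_iff ht (by omega) (by omega)).mpr (by omega)
  rcases Nat.lt_trichotomy (b - a) (2 * t) with hlt | heq | hgt
  · exact (graphF_dist_natCast_le_sub ht₀ hab).trans (by omega)
  · -- antipodal pair: go around through the chord `{0, 2}`
    rcases Nat.eq_zero_or_pos a with rfl | ha₀
    · calc (graphF t).dist ((0 : ℕ) : ZMod (4 * t)) b
          ≤ (graphF t).dist ((0 : ℕ) : ZMod (4 * t)) (2 : ℕ) + (graphF t).dist (2 : ℕ) b :=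
            hconn.dist_triangle
        _ ≤ 1 + (b - 2) := by
            gcongr
            · exact (dist_eq_one_iff_adj.mpr hchord).le
            · exact graphF_dist_natCast_le_sub ht₀ (by omega)
        _ = 2 * t - 1 := by omega
    · calc (graphF t).dist (a : ZMod (4 * t)) b
          ≤ (graphF t).dist (a : ZMod (4 * t)) (2 : ℕ) + (graphF t).dist (2 : ℕ) b :=
            hconn.dist_triangle
        _ ≤ (graphF t).dist (a : ZMod (4 * t)) (2 : ℕ) +
              ((graphF t).dist (2 : ℕ) (0 : ℕ) + (graphF t).dist (0 : ℕ) b) := by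
            gcongr; exact hconn.dist_triangle
        _ ≤ (a - 2) + (1 + (0 + 4 * t - b)) := by
            gcongr
            · rw [dist_comm]; exact graphF_dist_natCast_le_sub ht₀ (by omega)
            · exact (dist_eq_one_iff_adj.mpr hchord.symm).le
            · exact graphF_dist_natCast_le_add_sub ht₀ hb.le
        _ = 2 * t - 1 := by omega
  · exact (graphF_dist_natCast_le_add_sub ht₀ hb.le).trans (by omega)

theorem graphF_dist_le_of_ne (ht : 2 ≤ t) {x y : ZMod (4 * t)}
    (hxy : s(x, y) ≠ s(((1 : ℕ) : ZMod (4 * t)), ((2 * t + 1 : ℕ) : ZMod (4 * t)))) :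
    (graphF t).dist x y ≤ 2 * t - 1 := by
  have : NeZero (4 * t) := ⟨by omega⟩
  rw [← ZMod.natCast_zmod_val x, ← ZMod.natCast_zmod_val y] at hxy ⊢
  refine graphF_dist_natCast_le ht x.val_lt y.val_lt ?_ ?_ <;> rintro ⟨hx, hy⟩ <;> apply hxy
  · rw [hx, hy]
  · rw [hx, hy, Sym2.eq_swap]

theorem cycleGraph_adj_iff_val {n : ℕ} (hn : 2 ≤ n) {i j : Fin n} :
    (cycleGraph n).Adj i j ↔ j.val = i.val + 1 ∨ i.val = j.val + 1 ∨
      (i.val = 0 ∧ j.val = n - 1) ∨ (j.val = 0 ∧ i.val = n - 1) := by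
  have hmod : ∀ m < 2 * n, m % n = 1 ↔ m = 1 ∨ m = n + 1 := by
    intro m hm
    rcases Nat.lt_or_ge m n with h | h
    · rw [Nat.mod_eq_of_lt h]; omega
    · rw [Nat.mod_eq_sub_mod h, Nat.mod_eq_of_lt (by omega)]; omega
  rw [cycleGraph_adj', Fin.sub_def, Fin.sub_def, hmod _ (by omega), hmod _ (by omega)]
  omega

/-- The vertices of `F_t` other than `1` and `2t + 1`, in cyclic order. -/
def inducedCycleVertex (t i : ℕ) : ℕ :=
  if i = 0 then 0 else if i < 2 * t then i + 1 else i + 2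

theorem inducedCycleVertex_cases (t i : ℕ) :
    (i = 0 ∧ inducedCycleVertex t i = 0) ∨ (0 < i ∧ i < 2 * t ∧ inducedCycleVertex t i = i + 1) ∨
      (2 * t ≤ i ∧ inducedCycleVertex t i = i + 2) := by
  unfold inducedCycleVertex; split_ifs <;> omega

theorem graphF_exists_inducedCycle (ht : 2 ≤ t) :
    Nonempty (cycleGraph (4 * t - 2) ↪g graphF t) := by
  have hlt : ∀ i : Fin (4 * t - 2), inducedCycleVertex t i < 4 * t := fun i => by
    have := i.isLt; have := inducedCycleVertex_cases t i; omega
  refine ⟨⟨⟨fun i => (inducedCycleVertex t i : ZMod (4 * t)), fun i j hij => Fin.ext ?_⟩, ?_⟩⟩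
  · have := (ZMod.natCast_eq_natCast_iff_of_lt (hlt i) (hlt j)).mp hij
    have := inducedCycleVertex_cases t i; have := inducedCycleVertex_cases t j
    omega
  · intro i j
    change (graphF t).Adj (inducedCycleVertex t i : ZMod (4 * t)) (inducedCycleVertex t j) ↔ _
    rw [graphF_adj_natCast_iff ht (hlt i) (hlt j), cycleGraph_adj_iff_val (by omega)]
    have := i.isLt; have := j.isLt
    rcases inducedCycleVertex_cases t i with ⟨_, hi⟩ | ⟨_, _, hi⟩ | ⟨_, hi⟩ <;>
      rcases inducedCycleVertex_cases t j with ⟨_, hj⟩ | ⟨_, _, hj⟩ | ⟨_, hj⟩ <;>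
      rw [hi, hj] <;> omega

theorem graphF_isKChordal (ht : 2 ≤ t) : IsKChordal (graphF t) (4 * t - 2) := by
  intro n hn₃ hn
  obtain ⟨m, rfl⟩ : ∃ m, n = m + 2 := ⟨n - 2, by omega⟩
  refine ⟨fun e => ?_⟩
  have : NeZero (4 * t) := ⟨by omega⟩
  have hcast : ∀ {c d : ℕ}, c < 4 * t → d < 4 * t → ((c : ZMod (4 * t)) = d ↔ c = d) :=
    ZMod.natCast_eq_natCast_iff_of_lt
  have hadj := fun {c d : ℕ} (hc : c < 4 * t) (hd : d < 4 * t) =>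
    (graphF_adj_natCast_iff ht hc hd).mpr
  -- The chord endpoints `0` and `2t` have three neighbours each, so the induced cycle misses a
  -- vertex of each of their (disjoint) closed neighbourhoods.
  have h₁ := e.not_subset_range_of_three_neighbors (z := ((0 : ℕ) : ZMod (4 * t)))
    (a := (1 : ℕ)) (b := (2 : ℕ)) (c := (4 * t - 1 : ℕ))
    (hadj (by omega) (by omega) (by omega)) (hadj (by omega) (by omega) (by omega))
    (hadj (by omega) (by omega) (by omega))
    (by rw [ne_eq, hcast (by omega) (by omega)]; omega)
    (by rw [ne_eq, hcast (by omega) (by omega)]; omega)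
    (by rw [ne_eq, hcast (by omega) (by omega)]; omega)
  have h₂ := e.not_subset_range_of_three_neighbors (z := ((2 * t : ℕ) : ZMod (4 * t)))
    (a := (2 * t - 1 : ℕ)) (b := (2 * t + 1 : ℕ)) (c := (2 * t + 2 : ℕ))
    (hadj (by omega) (by omega) (by omega)) (hadj (by omega) (by omega) (by omega))
    (hadj (by omega) (by omega) (by omega))
    (by rw [ne_eq, hcast (by omega) (by omega)]; omega)
    (by rw [ne_eq, hcast (by omega) (by omega)]; omega)
    (by rw [ne_eq, hcast (by omega) (by omega)]; omega)
  obtain ⟨w₁, hw₁, hw₁e⟩ := Set.not_subset.mp h₁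
  obtain ⟨w₂, hw₂, hw₂e⟩ := Set.not_subset.mp h₂
  have hne : w₁ ≠ w₂ := by
    simp only [Set.mem_insert_iff, Set.mem_singleton_iff] at hw₁ hw₂
    rcases hw₁ with rfl | rfl | rfl | rfl <;> rcases hw₂ with rfl | rfl | rfl | rfl <;>
      rw [ne_eq, hcast (by omega) (by omega)] <;> omega
  have := Fintype.card_add_two_le_of_injective e.injective hne hw₁e hw₂e
  rw [Fintype.card_fin, ZMod.card] at this
  omega

/-- For `t ≥ 2`: the chordality of `F_t` is exactly `4t - 2`, and the hyperbolicity
of `F_t` is exactly `t - 1/2`, attained at `(x,y,u,v) = (v₂, v_{2t+2}, v_{t+2}, v_{3t+2})`. -/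
theorem graphF_chordality_and_hyperbolicity (t : ℕ) (ht : 2 ≤ t) :
    -- (a) `F_t` is `(4t-2)`-chordal and has an induced cycle of length `4t-2`
    IsKChordal (graphF t) (4 * t - 2) ∧
    Nonempty (SimpleGraph.cycleGraph (4 * t - 2) ↪g graphF t) ∧
    -- (b) the hyperbolicity of `F_t` equals `t - 1/2`
    (∀ x y u v : ZMod (4 * t),
      (graphF t).dist x y + (graphF t).dist u v ≤
        max ((graphF t).dist x u + (graphF t).dist y v)
          ((graphF t).dist x v + (graphF t).dist y u) + (2 * t - 1)) ∧
    ((graphF t).dist ((1 : ℕ) : ZMod (4 * t)) ((2 * t + 1 : ℕ) : ZMod (4 * t)) +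
        (graphF t).dist ((t + 1 : ℕ) : ZMod (4 * t)) ((3 * t + 1 : ℕ) : ZMod (4 * t)) =
      max ((graphF t).dist ((1 : ℕ) : ZMod (4 * t)) ((t + 1 : ℕ) : ZMod (4 * t)) +
            (graphF t).dist ((2 * t + 1 : ℕ) : ZMod (4 * t)) ((3 * t + 1 : ℕ) : ZMod (4 * t)))
          ((graphF t).dist ((1 : ℕ) : ZMod (4 * t)) ((3 * t + 1 : ℕ) : ZMod (4 * t)) +
            (graphF t).dist ((2 * t + 1 : ℕ) : ZMod (4 * t)) ((t + 1 : ℕ) : ZMod (4 * t))) +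
        (2 * t - 1)) := by
  have ht₀ : 0 < t := by omega
  have hfour := (graphF_connected ht₀).dist_add_dist_le_max_add
    (fun _ _ => graphF_dist_le_of_ne ht)
  refine ⟨graphF_isKChordal ht, graphF_exists_inducedCycle ht, hfour,
    le_antisymm (hfour _ _ _ _) ?_⟩
  have hxy := graphF_two_mul_le_dist_one ht
  have huv := graphF_two_mul_sub_one_le_dist_mid ht
  have hxu := graphF_dist_natCast_le_sub ht₀ (a := 1) (b := t + 1) (by omega)
  have hyv := graphF_dist_natCast_le_sub ht₀ (a := 2 * t + 1) (b := 3 * t + 1) (by omega)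
  have hxv := graphF_dist_natCast_le_add_sub ht₀ (a := 1) (b := 3 * t + 1) (by omega)
  have hyu := graphF_dist_natCast_le_sub ht₀ (a := t + 1) (b := 2 * t + 1) (by omega)
  rw [dist_comm] at hyu
  omega
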